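/- Let P be a Γ-colored poset. Then P satisfies EC, NA, AC, ICE2, and G3 if and only if P is a full heap. -/

import Mathlib

namespace GCP

/-- A Dynkin diagram on a finite set `Γ` of colors, encoded by the integers
`θ a b` of its generalized Cartan matrix. -/
structure DynkinDiagram (Γ : Type*) [Fintype Γ] where
  θ : Γ → Γ → ℤ
  diag : ∀ a, θ a a = 2
  offdiag_nonpos : ∀ a b, a ≠ b → θ a b ≤ 0
  zero_iff : ∀ a b, a ≠ b → (θ a b = 0 ↔ θ b a = 0)

variable {Γ : Type*} [Fintype Γ] {P : Type*} [PartialOrder P] [LocallyFiniteOrder P]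

/-- Distinct colors `a` and `b` are adjacent when `θ a b < 0`. -/
def DynkinDiagram.Adj (D : DynkinDiagram Γ) (a b : Γ) : Prop :=
  a ≠ b ∧ D.θ a b < 0

/-- Distinct colors `a` and `b` are distant when `θ a b = 0`. -/
def DynkinDiagram.Distant (D : DynkinDiagram Γ) (a b : Γ) : Prop :=
  a ≠ b ∧ D.θ a b = 0

theorem DynkinDiagram.Adj.symm {D : DynkinDiagram Γ} {a b : Γ} (h : D.Adj a b) :
    D.Adj b a :=
  ⟨h.1.symm, lt_of_le_of_ne (D.offdiag_nonpos b a h.1.symm)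
    (fun h0 => h.2.ne ((D.zero_iff a b h.1).mpr h0))⟩

/-- The simple graph underlying a Dynkin diagram, with an edge between each
pair of adjacent colors. -/
def DynkinDiagram.graph (D : DynkinDiagram Γ) : SimpleGraph Γ where
  Adj a b := D.Adj a b
  symm := ⟨fun _ _ h => h.symm⟩
  loopless := ⟨fun _ h => h.1 rfl⟩

/-- The Dynkin diagram is connected: any two colors are joined by a path of
adjacencies. -/
def DynkinDiagram.Connected (D : DynkinDiagram Γ) : Prop :=
  ∀ a b : Γ, Relation.ReflTransGen D.Adj a b

/-- A poset is connected: any two elements are linked by a finite chain of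
comparabilities (equivalently, the poset cannot be written as the disjoint
union of two nonempty subposets). -/
def PosetConnected (P : Type*) [PartialOrder P] : Prop :=
  ∀ x y : P, Relation.ReflTransGen (fun u v : P => u ≤ v ∨ v ≤ u) x y

/-- `x < y` are consecutive elements of the color `a`. -/
def Consecutive (κ : P → Γ) (a : Γ) (x y : P) : Prop :=
  x < y ∧ κ x = a ∧ κ y = a ∧ ∀ z ∈ Finset.Ioo x y, κ z ≠ a

/-- EC: elements with equal colors are comparable. -/
def EC (κ : P → Γ) : Prop := ∀ x y : P, κ x = κ y → x ≤ y ∨ y ≤ x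

/-- NA: neighbors (covering pairs) have adjacent colors. -/
def NA (D : DynkinDiagram Γ) (κ : P → Γ) : Prop :=
  ∀ x y : P, x ⋖ y → D.Adj (κ x) (κ y)

/-- AC: elements with adjacent colors are comparable. -/
def AC (D : DynkinDiagram Γ) (κ : P → Γ) : Prop :=
  ∀ x y : P, D.Adj (κ x) (κ y) → x ≤ y ∨ y ≤ x

/-- ICE2: the census of the open interval between consecutive elements of a
color is two. -/
def ICE2 (D : DynkinDiagram Γ) (κ : P → Γ) : Prop :=
  ∀ (a : Γ) (x y : P), Consecutive κ a x y →
    ∑ z ∈ Finset.Ioo x y, (-D.θ (κ z) a) = 2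

/-- `U(x,S)`: elements of `S` above `x` with color adjacent to that of `x`. -/
def USet (D : DynkinDiagram Γ) (κ : P → Γ) (S : Set P) (x : P) : Set P :=
  {y ∈ S | x < y ∧ D.Adj (κ y) (κ x)}

/-- `L(x,S)`: elements of `S` below `x` with color adjacent to that of `x`. -/
def LSet (D : DynkinDiagram Γ) (κ : P → Γ) (S : Set P) (x : P) : Set P :=
  {y ∈ S | y < x ∧ D.Adj (κ y) (κ x)}

/-- UCBk: for every `x` maximal among elements of its color, `U(x,P)` is
finite with census at most `k`. -/
def UCB (D : DynkinDiagram Γ) (κ : P → Γ) (k : ℕ) : Prop :=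
  ∀ x : P, (∀ y : P, κ y = κ x → ¬ x < y) →
    ∃ hfin : (USet D κ Set.univ x).Finite,
      ∑ y ∈ hfin.toFinset, (-D.θ (κ y) (κ x)) ≤ (k : ℤ)

/-- LCBk: for every `x` minimal among elements of its color, `L(x,P)` is
finite with census at most `k`. -/
def LCB (D : DynkinDiagram Γ) (κ : P → Γ) (k : ℕ) : Prop :=
  ∀ x : P, (∀ y : P, κ y = κ x → ¬ y < x) →
    ∃ hfin : (LSet D κ Set.univ x).Finite,
      ∑ y ∈ hfin.toFinset, (-D.θ (κ y) (κ x)) ≤ (k : ℤ)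

/-- The coloring properties of a Γ-colored d-complete poset (the coloring is
required to be surjective separately). -/
def DComplete (D : DynkinDiagram Γ) (κ : P → Γ) : Prop :=
  EC κ ∧ NA D κ ∧ AC D κ ∧ ICE2 D κ ∧ UCB D κ 1

/-- G1: each `P_a` and each `P_b ∪ P_c` for adjacent `b, c` is a chain. -/
def G1 (D : DynkinDiagram Γ) (κ : P → Γ) : Prop :=
  (∀ a : Γ, IsChain (· ≤ ·) {x : P | κ x = a}) ∧
    ∀ b c : Γ, D.Adj b c → IsChain (· ≤ ·) {x : P | κ x = b ∨ κ x = c}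

/-- G2: the order is the minimal partial order extending the given orders on
the chains `P_a` and `P_b ∪ P_c`; i.e. every relation `x ≤ y` lies in the
reflexive transitive closure of the relations between pairs of equal or
adjacent colors. -/
def G2 (D : DynkinDiagram Γ) (κ : P → Γ) : Prop :=
  ∀ x y : P, x ≤ y →
    Relation.ReflTransGen (fun u v : P => u ≤ v ∧ (κ u = κ v ∨ D.Adj (κ u) (κ v))) x y

/-- G3: every color set `P_a` is order-isomorphic to `ℤ`. -/
def G3 (κ : P → Γ) : Prop := ∀ a : Γ, Nonempty ({x : P | κ x = a} ≃o ℤ)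

/-- G4: for adjacent colors `a, b`, every element of color `a` has a neighbor
of color `b`. -/
def G4 (D : DynkinDiagram Γ) (κ : P → Γ) : Prop :=
  ∀ a b : Γ, D.Adj a b → ∀ x : P, κ x = a → ∃ y : P, κ y = b ∧ (x ⋖ y ∨ y ⋖ x)

/-- G5: the sum of `θ (κ z) a` over the closed interval between consecutive
elements of color `a` is two. -/
def G5 (D : DynkinDiagram Γ) (κ : P → Γ) : Prop :=
  ∀ (a : Γ) (x y : P), Consecutive κ a x y →
    ∑ z ∈ Finset.Icc x y, D.θ (κ z) a = 2

/-- A full heap: a Γ-colored poset satisfying G1–G5. -/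
def FullHeap (D : DynkinDiagram Γ) (κ : P → Γ) : Prop :=
  G1 D κ ∧ G2 D κ ∧ G3 κ ∧ G4 D κ ∧ G5 D κ

/-- S1: neighbors have equal or adjacent colors and incomparable elements
have distant colors. -/
def S1 (D : DynkinDiagram Γ) (κ : P → Γ) : Prop :=
  (∀ x y : P, x ⋖ y → κ x = κ y ∨ D.Adj (κ x) (κ y)) ∧
    ∀ x y : P, ¬ x ≤ y → ¬ y ≤ x → D.Distant (κ x) (κ y)

/-- S2: the open interval between consecutive elements of color `a` contains
either exactly two elements of color adjacent to `a`, both `1`-adjacent to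
`a`, or exactly one element, whose color is `2`-adjacent to `a`. -/
def S2 (D : DynkinDiagram Γ) (κ : P → Γ) : Prop :=
  ∀ (a : Γ) (x y : P), Consecutive κ a x y →
    (∃ u ∈ Finset.Ioo x y, ∃ v ∈ Finset.Ioo x y, u ≠ v ∧
        D.θ (κ u) a = -1 ∧ D.θ (κ v) a = -1 ∧
        ∀ z ∈ Finset.Ioo x y, D.Adj (κ z) a → z = u ∨ z = v) ∨
    (∃ w : P, Finset.Ioo x y = {w} ∧ D.θ (κ w) a = -2)

/-- S3: an element maximal among elements of its color is covered by at most
one element; any such cover has color `1`-adjacent to it and is maximal among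
elements of its own color. -/
def S3 (D : DynkinDiagram Γ) (κ : P → Γ) : Prop :=
  ∀ x : P, (∀ y : P, κ y = κ x → ¬ x < y) →
    (∀ y z : P, x ⋖ y → x ⋖ z → y = z) ∧
      ∀ y : P, x ⋖ y → D.θ (κ y) (κ x) = -1 ∧ ∀ z : P, κ z = κ y → ¬ y < z

/-- S4: the underlying simple graph of the Dynkin diagram is acyclic. -/
def S4 (D : DynkinDiagram Γ) : Prop := D.graph.IsAcyclic

/-- The coloring properties of a dominant minuscule heap (the poset is
additionally required to be finite, and the coloring surjective). -/
def DominantMinusculeHeapProps (D : DynkinDiagram Γ) (κ : P → Γ) : Prop :=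
  S1 D κ ∧ S2 D κ ∧ S3 D κ ∧ S4 D

/-- The color set `P_b` is bounded above in `P`. -/
def ColorBddAbove (κ : P → Γ) (b : Γ) : Prop := ∃ u : P, ∀ x : P, κ x = b → x ≤ u

/-- The color set `P_b` is bounded below in `P`. -/
def ColorBddBelow (κ : P → Γ) (b : Γ) : Prop := ∃ l : P, ∀ x : P, κ x = b → l ≤ x


/-!
G1 is EC together with AC, G5 is ICE2 (the closed interval adds `θ a a = 2` twice), and G2
follows from NA because `≤` is generated by `⋖` in a locally finite poset.

For G4, let `x` have color adjacent to `b`. Since `P_b ≅ ℤ` is unbounded in both directions and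
comparable with `x`, there are consecutive elements `y < x < z` of color `b`; take
`y ⋖ s ≤ x ≤ t ⋖ z`. By NA the colors of `s` and `t` are adjacent to `b`, and every element of
`(y, z)` contributes nonnegatively to the census, so if `s ≠ x ≠ t` the census would be at
least three.

Conversely, a covering pair with equal colors would be consecutive with empty interior, which
ICE2 forbids; so the generating relation of G2 that realizes a cover joins adjacent colors,
which is NA.
-/

open Finset

theorem _root_.Finset.sum_Icc_eq_add_add_sum_Ioo {α M : Type*} [PartialOrder α]
    [LocallyFiniteOrder α] [AddCommMonoid M] {x y : α} (h : x < y) (f : α → M) :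
    ∑ z ∈ Icc x y, f z = f x + f y + ∑ z ∈ Ioo x y, f z := by
  classical
  rw [Icc_eq_cons_Ioc h.le, sum_cons, ← Ioo_insert_right h, sum_insert right_notMem_Ioo,
    add_assoc]

theorem _root_.Relation.ReflTransGen.rel_of_covBy {α : Type*} [PartialOrder α]
    {r : α → α → Prop} (hr : ∀ u v, r u v → u ≤ v) {x y : α}
    (h : Relation.ReflTransGen r x y) (hxy : x ⋖ y) : r x y := by
  induction h with
  | refl => exact absurd hxy.lt (lt_irrefl x)
  | @tail b c hxb hbc ih =>
    have hxb : x ≤ b := by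
      simpa [Relation.reflTransGen_eq_self] using Relation.ReflTransGen.mono hr _ _ hxb
    rcases hxy.eq_or_eq hxb (hr b c hbc) with rfl | rfl
    · exact hbc
    · exact ih hxy

section OrderIsoInt

variable {α : Type*} [Preorder α] [LocallyFiniteOrder α] {S : Set α}

theorem not_bddAbove_of_orderIso_int (e : S ≃o ℤ) : ¬ BddAbove S := by
  rintro ⟨x, hx⟩
  refine ((Set.Ici_infinite 0).image
    (Subtype.val_injective.comp e.symm.injective).injOn) ((Set.finite_Icc (e.symm 0 : α) x).subset ?_)
  rintro _ ⟨n, hn, rfl⟩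
  exact ⟨e.symm.monotone hn, hx (e.symm n).2⟩

theorem not_bddBelow_of_orderIso_int (e : S ≃o ℤ) : ¬ BddBelow S := by
  rintro ⟨x, hx⟩
  refine ((Set.Iic_infinite 0).image
    (Subtype.val_injective.comp e.symm.injective).injOn) ((Set.finite_Icc x (e.symm 0 : α)).subset ?_)
  rintro _ ⟨n, hn, rfl⟩
  exact ⟨hx (e.symm n).2, e.symm.monotone hn⟩

end OrderIsoInt

theorem exists_consecutive_around {α : Type*} [PartialOrder α] [LocallyFiniteOrder α]
    {S : Set α} (e : S ≃o ℤ) {x : α} (hx : x ∉ S) (hcomp : ∀ s ∈ S, s ≤ x ∨ x ≤ s) :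
    ∃ y ∈ S, ∃ z ∈ S, y < x ∧ x < z ∧ ∀ w ∈ S, y < w → ¬ w < z := by
  have ne_of_mem : ∀ s ∈ S, s ≠ x := fun s hs h => hx (h ▸ hs)
  obtain ⟨s, hs, hsx⟩ := not_bddAbove_iff'.1 (not_bddAbove_of_orderIso_int e) x
  obtain ⟨t, ht, htx⟩ := not_bddBelow_iff'.1 (not_bddBelow_of_orderIso_int e) x
  have hxs : x < s := ((hcomp s hs).resolve_left hsx).lt_of_ne (ne_of_mem s hs).symm
  have htx : t < x := ((hcomp t ht).resolve_right htx).lt_of_ne (ne_of_mem t ht)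
  obtain ⟨n, hxn, hleast⟩ := Int.exists_least_of_bdd (P := fun n => x < e.symm n)
    ⟨e ⟨t, ht⟩, fun m hm => le_of_not_gt fun hmt => by
      have : (e.symm m : α) < t := e.symm_apply_lt.2 hmt
      exact lt_asymm htx (hm.trans this)⟩
    ⟨e ⟨s, hs⟩, by simpa using hxs⟩
  refine ⟨e.symm (n - 1), (e.symm (n - 1)).2, e.symm n, (e.symm n).2, ?_, hxn, ?_⟩
  · refine ((hcomp _ (e.symm (n - 1)).2).resolve_right fun hle => ?_).lt_of_ne
      (ne_of_mem _ (e.symm (n - 1)).2)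
    have := hleast (n - 1) (hle.lt_of_ne (ne_of_mem _ (e.symm (n - 1)).2).symm)
    omega
  · intro w hw hlow hhigh
    have h₁ : n - 1 < e ⟨w, hw⟩ := e.symm_apply_lt.1 hlow
    have h₂ : e ⟨w, hw⟩ < n := e.lt_symm_apply.1 hhigh
    omega

namespace DynkinDiagram

variable {D : DynkinDiagram Γ} {a b : Γ}

theorem neg_θ_nonneg (h : a ≠ b) : 0 ≤ -D.θ a b :=
  neg_nonneg.2 (D.offdiag_nonpos a b h)

theorem Adj.one_le_neg_θ (h : D.Adj a b) : 1 ≤ -D.θ a b := by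
  have := h.2
  omega

end DynkinDiagram

section ColoredPoset

variable {D : DynkinDiagram Γ} {κ : P → Γ}

theorem Consecutive.sum_Icc_θ (D : DynkinDiagram Γ) {a : Γ} {x y : P}
    (h : Consecutive κ a x y) :
    ∑ z ∈ Icc x y, D.θ (κ z) a = 4 - ∑ z ∈ Ioo x y, -D.θ (κ z) a := by
  rw [sum_Icc_eq_add_add_sum_Ioo h.1, h.2.1, h.2.2.1, D.diag, sum_neg_distrib]
  ring

theorem Consecutive.sum_le_census {a : Γ} {x y : P} (h : Consecutive κ a x y)
    {T : Finset P} (hT : T ⊆ Ioo x y) :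
    ∑ z ∈ T, -D.θ (κ z) a ≤ ∑ z ∈ Ioo x y, -D.θ (κ z) a :=
  sum_le_sum_of_subset_of_nonneg hT fun z hz _ => DynkinDiagram.neg_θ_nonneg (h.2.2.2 z hz)

theorem g5_iff_ice2 : G5 D κ ↔ ICE2 D κ :=
  forall₃_congr fun a x y => forall_congr' fun h => by
    rw [h.sum_Icc_θ D]
    omega

omit [LocallyFiniteOrder P] in
theorem g1_iff_ec_and_ac : G1 D κ ↔ EC κ ∧ AC D κ := by
  constructor
  · rintro ⟨hColor, hAdj⟩
    exact ⟨fun x y hxy => (hColor (κ x)).total rfl hxy.symm,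
      fun x y h => (hAdj _ _ h).total (Or.inl rfl) (Or.inr rfl)⟩
  · rintro ⟨hEC, hAC⟩
    refine ⟨fun a x hx y hy _ => hEC x y (hx.trans hy.symm), fun b c hbc x hx y hy _ => ?_⟩
    rcases hx with hx | hx <;> rcases hy with hy | hy
    · exact hEC x y (hx.trans hy.symm)
    · exact hAC x y (by rw [hx, hy]; exact hbc)
    · exact hAC x y (by rw [hx, hy]; exact hbc.symm)
    · exact hEC x y (hx.trans hy.symm)

theorem g2_of_na (hNA : NA D κ) : G2 D κ := fun x y hxy =>
  Relation.ReflTransGen.mono (fun u v huv => ⟨huv.le, Or.inr (hNA u v huv)⟩) x y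
    (le_iff_reflTransGen_covBy.1 hxy)

theorem ICE2.color_ne_of_covBy (hICE : ICE2 D κ) {x y : P} (hxy : x ⋖ y) : κ x ≠ κ y := by
  intro hcolor
  have hempty : Ioo x y = ∅ :=
    eq_empty_of_forall_notMem fun z hz => hxy.2 (mem_Ioo.1 hz).1 (mem_Ioo.1 hz).2
  have := hICE (κ x) x y ⟨hxy.lt, rfl, hcolor.symm, by simp [hempty]⟩
  simp [hempty] at this

theorem na_of_g2_of_ice2 (hG2 : G2 D κ) (hICE : ICE2 D κ) : NA D κ := fun x y hxy =>
  ((hG2 x y hxy.le).rel_of_covBy (fun _ _ h => h.1) hxy).2.resolve_left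
    (hICE.color_ne_of_covBy hxy)

theorem g4_of_na_of_ac_of_ice2_of_g3 (hNA : NA D κ) (hAC : AC D κ) (hICE : ICE2 D κ)
    (hG3 : G3 κ) : G4 D κ := by
  classical
  rintro a b hab x rfl
  obtain ⟨e⟩ := hG3 b
  obtain ⟨y, hyb, z, hzb, hyx, hxz, hgap⟩ := exists_consecutive_around e (x := x) hab.1
    fun u hu => hAC u x (by rw [show κ u = b from hu]; exact hab.symm)
  have hcons : Consecutive κ b y z :=
    ⟨hyx.trans hxz, hyb, hzb, fun w hw hwb => hgap w hwb (mem_Ioo.1 hw).1 (mem_Ioo.1 hw).2⟩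
  obtain ⟨s, hys, hsx⟩ := hyx.exists_covby_le
  obtain ⟨t, hxt, htz⟩ := hxz.exists_le_covby
  rcases hsx.eq_or_lt with rfl | hsx
  · exact ⟨y, hyb, Or.inr hys⟩
  rcases hxt.eq_or_lt with rfl | hxt
  · exact ⟨z, hzb, Or.inl htz⟩
  have hsb : D.Adj (κ s) b := (hyb ▸ hNA y s hys).symm
  have htb : D.Adj (κ t) b := hzb ▸ hNA t z htz
  have hthree : 3 ≤ ∑ w ∈ {s, x, t}, -D.θ (κ w) b := by
    rw [sum_insert (by simp [hsx.ne, (hsx.trans hxt).ne]), sum_insert (by simp [hxt.ne]),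
      sum_singleton]
    linarith [hsb.one_le_neg_θ, hab.one_le_neg_θ, htb.one_le_neg_θ]
  have hsub : {s, x, t} ⊆ Ioo y z := by
    simp only [insert_subset_iff, singleton_subset_iff, mem_Ioo]
    exact ⟨⟨hys.lt, hsx.trans hxz⟩, ⟨hyx, hxz⟩, ⟨hyx.trans hxt, htz.lt⟩⟩
  have := hcons.sum_le_census (D := D) hsub
  rw [hICE b y z hcons] at this
  omega

end ColoredPoset

theorem statement3_general (D : DynkinDiagram Γ) (κ : P → Γ) :
    (EC κ ∧ NA D κ ∧ AC D κ ∧ ICE2 D κ ∧ G3 κ) ↔ FullHeap D κ := by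
  rw [FullHeap, g1_iff_ec_and_ac, g5_iff_ice2]
  constructor
  · rintro ⟨hEC, hNA, hAC, hICE, hG3⟩
    exact ⟨⟨hEC, hAC⟩, g2_of_na hNA, hG3,
      g4_of_na_of_ac_of_ice2_of_g3 hNA hAC hICE hG3, hICE⟩
  · rintro ⟨⟨hEC, hAC⟩, hG2, hG3, -, hICE⟩
    exact ⟨hEC, na_of_g2_of_ice2 hG2 hICE, hAC, hICE, hG3⟩

/-- EC, NA, AC, ICE2, G3 hold iff `P` is a full heap. -/
theorem statement3 (D : DynkinDiagram Γ) (κ : P → Γ) (hsurj : Function.Surjective κ) :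
    (EC κ ∧ NA D κ ∧ AC D κ ∧ ICE2 D κ ∧ G3 κ) ↔ FullHeap D κ :=
  statement3_general D κ

end GCP
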